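/- Let p ≥ 3 be an integer, let ω' be any Sturmian word over the alphabet {0,1}, and let ω = (p−1)(p−2)⋯2 ω' be the infinite word over {0,1,…,p−1} obtained by prepending the letters p−1, p−2, …, 2 (each once, in this order) to ω'. Then ρ^ab_ω(n) = p for all n ≥ 1. -/

import Mathlib

/-- The factor of the infinite word `ω` of length `n` starting at position `i`. -/
def factor {A : Type*} (ω : ℕ → A) (i n : ℕ) : List A :=
  (List.range n).map fun j => ω (i + j)

/-- The abelian complexity of `ω`: the number of abelian equivalence classes of
factors of `ω` of length `n`. -/
noncomputable def abelianComplexity {A : Type*} [DecidableEq A] (ω : ℕ → A) (n : ℕ) : ℕ :=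
  Set.ncard {c : A → ℕ | ∃ i : ℕ, c = fun a => (factor ω i n).count a}

/-- `ω` is `C`-balanced. -/
def IsCBalanced {A : Type*} [DecidableEq A] (ω : ℕ → A) (C : ℕ) : Prop :=
  ∀ a : A, ∀ n i j : ℕ,
    |((factor ω i n).count a : ℤ) - ((factor ω j n).count a : ℤ)| ≤ (C : ℤ)

/-- `ω` is ultimately periodic. -/
def UltimatelyPeriodic {A : Type*} (ω : ℕ → A) : Prop :=
  ∃ m p : ℕ, 0 < p ∧ ∀ n : ℕ, m ≤ n → ω (n + p) = ω n

/-!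
The first `p - 2` letters of `ω` are distinct and never recur, so the factor starting at one of
them contains that letter while no later factor does: this yields `p - 2` Parikh vectors,
distinct from each other and from all the others. The remaining factors are those of `ω'`,
relabelled injectively, and a Sturmian word has exactly two Parikh vectors in each length
`n ≥ 1`: balance confines the number of `1`s to two adjacent values, and if only one of them
occurred the word would be periodic with period `n`.
-/

variable {A B : Type*}

lemma factor_succ_eq_cons (ω : ℕ → A) (i n : ℕ) :
    factor ω i (n + 1) = ω i :: factor ω (i + 1) n := by
  simp [factor, List.range_succ_eq_map, Function.comp_def, Nat.add_assoc, Nat.add_comm 1]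

lemma factor_succ_eq_append (ω : ℕ → A) (i n : ℕ) :
    factor ω i (n + 1) = factor ω i n ++ [ω (i + n)] := by
  simp [factor, List.range_succ]

lemma length_factor (ω : ℕ → A) (i n : ℕ) : (factor ω i n).length = n := by
  simp [factor]

lemma mem_factor {ω : ℕ → A} {i n : ℕ} {a : A} :
    a ∈ factor ω i n ↔ ∃ k < n, ω (i + k) = a := by
  simp [factor]

lemma factor_comp (f : A → B) (ω : ℕ → A) (i n : ℕ) :
    factor (f ∘ ω) i n = (factor ω i n).map f := by
  simp [factor, Function.comp_def]

lemma factor_shift (ω : ℕ → A) (k i n : ℕ) :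
    factor (fun j => ω (k + j)) i n = factor ω (k + i) n := by
  simp [factor, Nat.add_assoc]

section Parikh

variable [DecidableEq A] [DecidableEq B]

def parikh (ω : ℕ → A) (i n : ℕ) (a : A) : ℕ := (factor ω i n).count a

lemma parikh_shift (ω : ℕ → A) (k i n : ℕ) :
    parikh (fun j => ω (k + j)) i n = parikh ω (k + i) n := by
  funext a
  simp only [parikh, factor_shift]

lemma abelianComplexity_eq_ncard_range (ω : ℕ → A) (n : ℕ) :
    abelianComplexity ω n = (Set.range (parikh ω · n)).ncard := by
  rw [abelianComplexity]
  congr 1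
  ext c
  exact exists_congr fun i => eq_comm

lemma finite_range_parikh [Finite A] (ω : ℕ → A) (n : ℕ) :
    (Set.range (parikh ω · n)).Finite := by
  refine (Set.Finite.pi (t := fun _ : A => Set.Iic n) fun _ => Set.finite_Iic n).subset ?_
  rintro _ ⟨i, rfl⟩ a -
  simpa [parikh, length_factor] using (factor ω i n).count_le_length (a := a)

lemma parikh_comp {f : A → B} (hf : f.Injective) (ω : ℕ → A) (i n : ℕ) :
    parikh (f ∘ ω) i n = Function.extend f (parikh ω i n) 0 := by
  funext b
  by_cases hb : ∃ a, f a = b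
  · obtain ⟨a, rfl⟩ := hb
    simp [parikh, factor_comp, List.count_map_of_injective _ _ hf, hf.extend_apply]
  · rw [Function.extend_apply' _ _ _ hb, parikh, factor_comp, Pi.zero_apply, List.count_eq_zero]
    simp only [List.mem_map, not_exists, not_and]
    exact fun a _ hab => hb ⟨a, hab⟩

lemma abelianComplexity_comp {f : A → B} (hf : f.Injective) (ω : ℕ → A) (n : ℕ) :
    abelianComplexity (f ∘ ω) n = abelianComplexity ω n := by
  simp only [abelianComplexity_eq_ncard_range, parikh_comp hf]
  exact (congrArg Set.ncard (Set.range_comp _ _)).trans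
    (Set.ncard_image_of_injective _ (Function.extend_injective hf (0 : B → ℕ)))

lemma parikh_ne_of_lt {ω : ℕ → A} {i j n : ℕ} (hn : 0 < n) (hij : i < j)
    (hfresh : ∀ m, i < m → ω m ≠ ω i) : parikh ω i n ≠ parikh ω j n := by
  intro h
  have hpos : 0 < parikh ω i n (ω i) :=
    List.count_pos_iff.mpr (mem_factor.mpr ⟨0, hn, rfl⟩)
  have hzero : parikh ω j n (ω i) = 0 := by
    refine List.count_eq_zero.mpr fun hmem => ?_
    obtain ⟨k, -, hk⟩ := mem_factor.mp hmem
    exact hfresh (j + k) (by omega) hk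
  rw [h, hzero] at hpos
  exact hpos.ne rfl

lemma abelianComplexity_eq_add_of_fresh_prefix [Finite A] {ω : ℕ → A} {n : ℕ} (hn : 0 < n)
    (k : ℕ) (hfresh : ∀ i < k, ∀ m, i < m → ω m ≠ ω i) :
    abelianComplexity ω n = k + abelianComplexity (fun j => ω (k + j)) n := by
  have hshift : Set.range (parikh (fun j => ω (k + j)) · n) =
      Set.range fun j => parikh ω (k + j) n := by
    simp only [parikh_shift]
  have hsplit : Set.range (parikh ω · n) =
      (parikh ω · n) '' Set.Iio k ∪ Set.range fun j => parikh ω (k + j) n := by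
    ext c
    constructor
    · rintro ⟨i, rfl⟩
      by_cases hi : i < k
      · exact Or.inl ⟨i, hi, rfl⟩
      · exact Or.inr ⟨i - k, by simp only [Nat.add_sub_cancel' (not_lt.mp hi)]⟩
    · rintro (⟨i, -, rfl⟩ | ⟨j, rfl⟩) <;> exact ⟨_, rfl⟩
  have hdisj :
      Disjoint ((parikh ω · n) '' Set.Iio k) (Set.range fun j => parikh ω (k + j) n) := by
    refine Set.disjoint_left.mpr ?_
    rintro _ ⟨i, hi, rfl⟩ ⟨j, hj⟩
    exact parikh_ne_of_lt hn ((Set.mem_Iio.mp hi).trans_le (k.le_add_right j)) (hfresh i hi) hj.symm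
  have hinj : Set.InjOn (parikh ω · n) (Set.Iio k) := by
    intro i hi i' hi' h
    by_contra hne
    rcases Nat.lt_or_gt_of_ne hne with hlt | hlt
    · exact parikh_ne_of_lt hn hlt (hfresh i hi) h
    · exact parikh_ne_of_lt hn hlt (hfresh i' hi') h.symm
  rw [abelianComplexity_eq_ncard_range, abelianComplexity_eq_ncard_range, hshift, hsplit,
    Set.ncard_union_eq hdisj ((Set.finite_Iio k).image _) (hshift ▸ finite_range_parikh _ n),
    hinj.ncard_image, Set.ncard_Iio_nat]

lemma add_eq_of_parikh_succ_eq {ω : ℕ → A} {j n : ℕ}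
    (h : parikh ω (j + 1) n = parikh ω j n) :
    ω (j + n) = ω j := by
  have hcount := congrArg (List.count (ω j)) ((factor_succ_eq_cons ω j n).symm.trans
    (factor_succ_eq_append ω j n))
  have hj := congrFun h (ω j)
  simp only [parikh] at hj
  simp only [List.count_cons_self, List.count_append, List.count_singleton, hj] at hcount
  by_contra hne
  simp [hne] at hcount

lemma exists_parikh_ne_of_not_ultimatelyPeriodic {ω : ℕ → A} (hap : ¬ UltimatelyPeriodic ω)
    {n : ℕ} (hn : 0 < n) : ∃ j, parikh ω j n ≠ parikh ω 0 n := by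
  by_contra! hconst
  exact hap ⟨0, n, hn, fun j _ => add_eq_of_parikh_succ_eq ((hconst _).trans (hconst j).symm)⟩

end Parikh

section Binary

lemma count_zero_add_count_one (l : List (Fin 2)) : l.count 0 + l.count 1 = l.length := by
  induction l with
  | nil => rfl
  | cons a l ih =>
    fin_cases a <;> simp <;> omega

lemma parikh_eq_iff_count_one_eq {ω : ℕ → Fin 2} {i j n : ℕ} :
    parikh ω i n = parikh ω j n ↔ (factor ω i n).count 1 = (factor ω j n).count 1 := by
  refine ⟨fun h => congrFun h 1, fun h => funext (Fin.forall_fin_two.mpr ⟨?_, h⟩)⟩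
  have hi := count_zero_add_count_one (factor ω i n)
  have hj := count_zero_add_count_one (factor ω j n)
  rw [length_factor] at hi hj
  simp only [parikh]
  omega

theorem abelianComplexity_eq_two_of_sturmian {ω : ℕ → Fin 2} (hap : ¬ UltimatelyPeriodic ω)
    (hbal : IsCBalanced ω 1) {n : ℕ} (hn : 0 < n) : abelianComplexity ω n = 2 := by
  obtain ⟨J, hJ⟩ := exists_parikh_ne_of_not_ultimatelyPeriodic hap hn
  have hrange : Set.range (parikh ω · n) = {parikh ω 0 n, parikh ω J n} := by
    refine Set.eq_of_subset_of_subset ?_ (Set.insert_subset (Set.mem_range_self 0)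
      (Set.singleton_subset_iff.mpr (Set.mem_range_self J)))
    rintro _ ⟨i, rfl⟩
    have hJ0 := abs_le.mp (hbal 1 n J 0)
    have hi0 := abs_le.mp (hbal 1 n i 0)
    have hiJ := abs_le.mp (hbal 1 n i J)
    rw [Ne, parikh_eq_iff_count_one_eq] at hJ
    simp only [Set.mem_insert_iff, Set.mem_singleton_iff, parikh_eq_iff_count_one_eq]
    omega
  rw [abelianComplexity_eq_ncard_range, hrange, Set.ncard_pair hJ.symm]

end Binary

/-- Let `p ≥ 3`, let `ω'` be a Sturmian word (aperiodic and balanced) over `{0,1}`,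
and let `ω = (p-1)(p-2)⋯2 ω'` over the alphabet `{0,…,p-1}`. Then
`ρ^ab_ω(n) = p` for all `n ≥ 1`. -/
theorem abelianComplexity_of_prependedSturmian
    (p : ℕ) (hp : 3 ≤ p) (ω' : ℕ → Fin 2)
    (hap : ¬ UltimatelyPeriodic ω') (hbal : IsCBalanced ω' 1)
    (ω : ℕ → Fin p)
    (hω : ∀ n : ℕ, ω n = if h : n < p - 2 then ⟨p - 1 - n, by omega⟩
        else ⟨(ω' (n - (p - 2))).val, by have := (ω' (n - (p - 2))).isLt; omega⟩) :
    ∀ n : ℕ, 1 ≤ n → abelianComplexity ω n = p := by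
  intro n hn
  have hval : ∀ m, (ω m).val = if m < p - 2 then p - 1 - m else (ω' (m - (p - 2))).val := by
    intro m
    rw [hω]
    split_ifs <;> rfl
  have hfresh : ∀ i < p - 2, ∀ m, i < m → ω m ≠ ω i := by
    intro i hi m him heq
    have hm := congrArg Fin.val heq
    have := (ω' (m - (p - 2))).isLt
    rw [hval, hval] at hm
    split_ifs at hm <;> omega
  have hsuffix : (fun j => ω (p - 2 + j)) = Fin.castLE (by omega) ∘ ω' := by
    funext j
    ext
    simp [hval]
  rw [abelianComplexity_eq_add_of_fresh_prefix hn (p - 2) hfresh, hsuffix,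
    abelianComplexity_comp (Fin.castLE_injective _),
    abelianComplexity_eq_two_of_sturmian hap hbal hn]
  omega
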